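/- arXiv:2105.11400 — 2 statements merged into one kernel-verified Lean document; each statement's English description precedes it below -/
import Mathlib

section
/- Let f : A → B be a distance function into a distance domain B with f(w) ≥ d_min > ⊥_B for all weights w appearing in a finite spatial model, and suppose d₂ ∈ B with d₂ ≠ ⊤_B. Then for any route τ, there exists k such that for all i ≥ k, d_τ^f[i] > d₂; in particular only finitely many route prefixes have accumulated distance at most d₂. (This is the termination argument for the bounded-reach monitoring algorithm.) -/
/-- An `A`-spatial model: a proximity function associating at most one weight
with each pair of locations. -/
structure SpatialModel (L A : Type*) where
  W : L → A → L → Prop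
  unique : ∀ l w w' l', W l w l' → W l w' l' → w = w'

/-- A route: an infinite sequence of locations together with the weights of the
traversed edges. -/
structure Route {L A : Type*} (S : SpatialModel L A) where
  loc : ℕ → L
  wt : ℕ → A
  step : ∀ i, S.W (loc i) (wt i) (loc (i + 1))

/-- The suffix route `τ[1..]`. -/
def Route.shift {L A : Type*} {S : SpatialModel L A} (τ : Route S) : Route S :=
  ⟨fun i => τ.loc (i + 1), fun i => τ.wt (i + 1), fun i => τ.step (i + 1)⟩

/-- The distance `d_τ^f[i]` along a route up to index `i`, accumulated with `add`
starting from `bot`. -/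
def routeDist {L A B : Type*} {S : SpatialModel L A} (add : B → B → B) (bot : B)
    (f : A → B) : Route S → ℕ → B
  | _, 0 => bot
  | τ, (i + 1) => add (f (τ.wt 0)) (routeDist add bot f τ.shift i)

/-- A distance domain: a total order with minimum ⊥ and maximum ⊤, a monoid
structure with unit ⊥, and a monotone addition. -/
structure DistanceDomain (B : Type*) where
  le : B → B → Prop
  add : B → B → B
  bot : B
  top : B
  le_refl : ∀ a, le a a
  le_trans : ∀ a b c, le a b → le b c → le a c
  le_antisymm : ∀ a b, le a b → le b a → a = b
  le_total : ∀ a b, le a b ∨ le b a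
  bot_le : ∀ a, le bot a
  le_top : ∀ a, le a top
  add_assoc : ∀ a b c, add (add a b) c = add a (add b c)
  bot_add : ∀ a, add bot a = a
  add_bot : ∀ a, add a bot = a
  add_mono : ∀ a b c d, le a b → le c d → le (add a c) (add b d)

/-- Strict order in a distance domain. -/
def DistanceDomain.lt {B : Type*} (Bd : DistanceDomain B) (a b : B) : Prop :=
  Bd.le a b ∧ a ≠ b

/-- The n-fold sum of a value d (with the empty sum being ⊥). -/
def DistanceDomain.nsum {B : Type*} (Bd : DistanceDomain B) (d : B) : ℕ → B
  | 0 => Bd.bot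
  | n + 1 => Bd.add d (Bd.nsum d n)

/-- If every edge weight of the model has f-distance at least d_min > ⊥, and
d₂ ≠ ⊤ is exceeded by some finite fold of d_min, then along any route the
accumulated distance eventually (and permanently) exceeds d₂: only finitely
many route prefixes have accumulated distance at most d₂. -/
theorem boundedReach_termination {L A B : Type*} (Bd : DistanceDomain B)
    (S : SpatialModel L A) (f : A → B) (dmin d2 : B)
    (hmin : Bd.lt Bd.bot dmin)
    (hedge : ∀ l w l', S.W l w l' → Bd.le dmin (f w))
    (hd2 : d2 ≠ Bd.top)
    (harch : ∃ n, Bd.lt d2 (Bd.nsum dmin n)) :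
    ∀ τ : Route S, ∃ k, ∀ i, k ≤ i →
      Bd.lt d2 (routeDist Bd.add Bd.bot f τ i) := by
  obtain ⟨n, hn⟩ := harch
  -- nsum is monotone in the count
  have hstep : ∀ m, Bd.le (Bd.nsum dmin m) (Bd.nsum dmin (m+1)) := by
    intro m
    have := Bd.add_mono Bd.bot dmin (Bd.nsum dmin m) (Bd.nsum dmin m) hmin.1
      (Bd.le_refl _)
    rwa [Bd.bot_add] at this
  have hmono : ∀ a b, a ≤ b → Bd.le (Bd.nsum dmin a) (Bd.nsum dmin b) := by
    intro a b hab
    induction b with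
    | zero => simp at hab; subst hab; exact Bd.le_refl _
    | succ b ih =>
      rcases Nat.lt_or_ge a (b+1) with h | h
      · exact Bd.le_trans _ _ _ (ih (Nat.lt_succ_iff.mp h)) (hstep b)
      · have : a = b + 1 := le_antisymm hab h
        subst this; exact Bd.le_refl _
  have hdist : ∀ (i : ℕ) (τ : Route S),
      Bd.le (Bd.nsum dmin i) (routeDist Bd.add Bd.bot f τ i) := by
    intro i
    induction i with
    | zero => intro τ; exact Bd.le_refl _
    | succ i ih =>
      intro τ
      exact Bd.add_mono _ _ _ _ (hedge _ _ _ (τ.step 0)) (ih τ.shift)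
  intro τ
  refine ⟨n, fun i hi => ?_⟩
  have h1 : Bd.le (Bd.nsum dmin n) (routeDist Bd.add Bd.bot f τ i) :=
    Bd.le_trans _ _ _ (hmono n i hi) (hdist i τ)
  refine ⟨Bd.le_trans _ _ _ hn.1 h1, fun heq => ?_⟩
  exact hn.2 (Bd.le_antisymm _ _ hn.1 (heq ▸ h1))
end

section
/- Satisfaction of STREL reach and escape formulas is invariant under isometries of the plane: if E(L, μ, R) and E(L, μ', R) are Euclidean spatial models with μ' = A ∘ μ for an isometry A of ℝ², the distance predicate d is isometry-invariant (d(v) = d(A v)), and the monitoring values of subformulas φ₁, φ₂ agree at every location and time in both models, then the monitoring values of φ₁ R_d φ₂ (reach) and E_d φ₁ (escape) agree at every location and time in both models. -/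
/-- The Euclidean spatial model: edges labelled by μ(ℓ₁) − μ(ℓ₂). -/
def euclideanModel {L V : Type*} [SubtractionMonoid V] (R : L → L → Prop)
    (lam : L → V) : SpatialModel L V where
  W l1 w l2 := R l1 l2 ∧ w = lam l1 - lam l2
  unique := by rintro l w w' l' ⟨-, rfl⟩ ⟨-, rfl⟩; rfl

/-- The plane ℝ². -/
abbrev Plane := EuclideanSpace ℝ (Fin 2)

/-- Boolean semantics of the reach operator φ₁ R_d φ₂ at a location: there is
a route from ℓ and an index i whose accumulated f-distance satisfies the
predicate, with φ₂ at τ[i] and φ₁ at all earlier locations. -/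
def reachSem {L : Type*} (M : SpatialModel L Plane) (f : Plane → ℝ)
    (pred : ℝ → Prop) (m1 m2 : L → Prop) (ℓ : L) : Prop :=
  ∃ τ : Route M, τ.loc 0 = ℓ ∧ ∃ i : ℕ,
    pred (∑ j ∈ Finset.range i, f (τ.wt j)) ∧ m2 (τ.loc i) ∧
    ∀ j < i, m1 (τ.loc j)

/-- The set of accumulated f-distances over routes from l reaching l'. -/
def distSet {L : Type*} (M : SpatialModel L Plane) (f : Plane → ℝ)
    (l l' : L) : Set ℝ :=
  {x | ∃ τ : Route M, τ.loc 0 = l ∧ ∃ k : ℕ, τ.loc k = l' ∧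
        x = ∑ j ∈ Finset.range k, f (τ.wt j)}

/-- Boolean semantics of the escape operator E_d φ₁ at a location: there is a
route from ℓ and an index i such that the minimal distance from ℓ to τ[i]
satisfies the predicate, and φ₁ holds along the route up to i. -/
def escapeSem {L : Type*} (M : SpatialModel L Plane) (f : Plane → ℝ)
    (pred : ℝ → Prop) (m1 : L → Prop) (ℓ : L) : Prop :=
  ∃ τ : Route M, τ.loc 0 = ℓ ∧ ∃ i : ℕ,
    pred (sInf (distSet M f ℓ (τ.loc i))) ∧ ∀ j, j ≤ i → m1 (τ.loc j)

/-- Transport a route along an isometry of the plane. -/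
noncomputable def liftRoute {L : Type*} {R : L → L → Prop} {μ : L → Plane}
    (A : Plane ≃ₗᵢ[ℝ] Plane) (τ : Route (euclideanModel R μ)) :
    Route (euclideanModel R (fun l => A (μ l))) :=
  ⟨τ.loc, fun i => A (τ.wt i), fun i =>
    ⟨(τ.step i).1, by simp only []; rw [(τ.step i).2]; simp⟩⟩

lemma distSet_subset {L : Type*} (R : L → L → Prop) (μ : L → Plane)
    (A : Plane ≃ₗᵢ[ℝ] Plane) (f : Plane → ℝ) (hf : ∀ v, f (A v) = f v)
    (l l' : L) :
    distSet (euclideanModel R μ) f l l' ⊆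
      distSet (euclideanModel R (fun l => A (μ l))) f l l' := by
  rintro x ⟨τ, h0, k, hk, rfl⟩
  exact ⟨liftRoute A τ, h0, k, hk, by simp [liftRoute, hf]⟩

lemma hf_symm {A : Plane ≃ₗᵢ[ℝ] Plane} {f : Plane → ℝ}
    (hf : ∀ v, f (A v) = f v) : ∀ v, f (A.symm v) = f v := by
  intro v
  conv_rhs => rw [← A.apply_symm_apply v, hf]

lemma distSet_eq {L : Type*} (R : L → L → Prop) (μ : L → Plane)
    (A : Plane ≃ₗᵢ[ℝ] Plane) (f : Plane → ℝ) (hf : ∀ v, f (A v) = f v)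
    (l l' : L) :
    distSet (euclideanModel R μ) f l l' =
      distSet (euclideanModel R (fun l => A (μ l))) f l l' := by
  apply Set.Subset.antisymm (distSet_subset R μ A f hf l l')
  have h := distSet_subset R (fun l => A (μ l)) A.symm f (hf_symm hf) l l'
  simpa using h

lemma reach_mono {L : Type*} (R : L → L → Prop) (μ : L → Plane)
    (A : Plane ≃ₗᵢ[ℝ] Plane) (f : Plane → ℝ) (pred : ℝ → Prop)
    (m1 m2 : L → Prop) (hf : ∀ v, f (A v) = f v) (ℓ : L)
    (h : reachSem (euclideanModel R μ) f pred m1 m2 ℓ) :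
    reachSem (euclideanModel R (fun l => A (μ l))) f pred m1 m2 ℓ := by
  obtain ⟨τ, h0, i, hp, h2, h1⟩ := h
  exact ⟨liftRoute A τ, h0, i, by simpa [liftRoute, hf] using hp, h2, h1⟩

lemma escape_mono {L : Type*} (R : L → L → Prop) (μ : L → Plane)
    (A : Plane ≃ₗᵢ[ℝ] Plane) (f : Plane → ℝ) (pred : ℝ → Prop)
    (m1 : L → Prop) (hf : ∀ v, f (A v) = f v) (ℓ : L)
    (h : escapeSem (euclideanModel R μ) f pred m1 ℓ) :
    escapeSem (euclideanModel R (fun l => A (μ l))) f pred m1 ℓ := by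
  obtain ⟨τ, h0, i, hp, h1⟩ := h
  refine ⟨liftRoute A τ, h0, i, ?_, h1⟩
  rwa [← distSet_eq R μ A f hf]

/-- Invariance of reach and escape under isometries of the plane: if
μ' = A ∘ μ for an isometry A, and the distance function f is
isometry-invariant, then the monitoring values of reach and escape agree at
every location in the two Euclidean spatial models (the subformula monitoring
values m1, m2 being the same in both models). -/
theorem strel_isometry_invariance {L : Type*} (R : L → L → Prop)
    (μ : L → Plane) (A : Plane ≃ₗᵢ[ℝ] Plane) (f : Plane → ℝ)
    (pred : ℝ → Prop) (m1 m2 : L → Prop)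
    (hf : ∀ v, f (A v) = f v) :
    ∀ ℓ : L,
      (reachSem (euclideanModel R μ) f pred m1 m2 ℓ ↔
        reachSem (euclideanModel R (fun l => A (μ l))) f pred m1 m2 ℓ) ∧
      (escapeSem (euclideanModel R μ) f pred m1 ℓ ↔
        escapeSem (euclideanModel R (fun l => A (μ l))) f pred m1 ℓ) := by
  intro ℓ
  have key : (fun l => A.symm (A (μ l))) = μ := by funext l; simp
  constructor
  · constructor
    · exact reach_mono R μ A f pred m1 m2 hf ℓ
    · intro h
      have := reach_mono R (fun l => A (μ l)) A.symm f pred m1 m2 (hf_symm hf) ℓ h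
      rwa [key] at this
  · constructor
    · exact escape_mono R μ A f pred m1 hf ℓ
    · intro h
      have := escape_mono R (fun l => A (μ l)) A.symm f pred m1 (hf_symm hf) ℓ h
      rwa [key] at this
end
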